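/- For every M ∈ M_N(ℂ) with zero diagonal and M • M = 0, there exist a •-invertible matrix P and an involution π of {1,…,N} such that the weak upper triangle of P • M • P^{•−1} equals the strictly upper triangular part of the permutation matrix of π; that is, for all i ≤ j, (P • M • P^{•−1})_{ij} = 1 if i < j and j = π(i), and (P • M • P^{•−1})_{ij} = 0 otherwise. -/

import Mathlib

/-!
For upper triangular matrices the product `•` is the ordinary product, and the weak upper
triangle of `P • Q` depends only on the weak upper triangles of `P` and `Q`. Replacing `M` by its
upper triangle `A` therefore reduces the theorem to Melnikov's normal form: an upper triangular
`A` with `A * A = 0` is conjugate, by an invertible upper triangular matrix, to the strictly upper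
part of the permutation matrix of an involution.

This goes by induction on the size. Write `A = [[0, r], [0, A']]` and put `A'` in normal form
`S`; then `r` becomes a row `s` with `s S = 0`. Adding multiples of the rows of `S` clears the
entries of `s` at the endpoints of arcs, `s S = 0` forces those at the starting points to vanish,
and the leftmost surviving entry, at a fixed point `k`, clears the others and becomes a new arc
`(0, k + 1)`; if none survives, `0` is a new fixed point.
-/

open Matrix BigOperators Finset

/-- `cyc3 i j k` : the sequence `(i,j,k)` of indices is cyclically ordered `⟨i ≤ j ≤ k⟩`,
i.e. some cyclic rotation of it is weakly increasing, with all entries required to be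
equal when the first and last entries coincide. -/
def cyc3 {N : ℕ} (i j k : Fin N) : Prop :=
  if i = k then j = i
  else (i ≤ j ∧ j ≤ k) ∨ (j ≤ k ∧ k ≤ i) ∨ (k ≤ i ∧ i ≤ j)

instance cyc3.dec {N : ℕ} (i j k : Fin N) : Decidable (cyc3 i j k) := by
  unfold cyc3; infer_instance

/-- The degenerate product `•` on `N × N` complex matrices:
`(P • Q)_{ik} = ∑_{j : ⟨i ≤ j ≤ k⟩} P_{ij} Q_{jk}`. -/
noncomputable def cprod {N : ℕ} (P Q : Matrix (Fin N) (Fin N) ℂ) :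
    Matrix (Fin N) (Fin N) ℂ :=
  Matrix.of fun i k => ∑ j ∈ Finset.univ.filter (fun j => cyc3 i j k), P i j * Q j k

open Equiv Function

namespace BrauerMelnikov

variable {K : Type*} [Field K] {n : ℕ}

def BorelConj (A B : Matrix (Fin n) (Fin n) K) : Prop :=
  ∃ P Q : Matrix (Fin n) (Fin n) K,
    P.IsUpperTriangular ∧ Q.IsUpperTriangular ∧ P * Q = 1 ∧ P * A * Q = B

theorem BorelConj.refl (A : Matrix (Fin n) (Fin n) K) : BorelConj A A :=
  ⟨1, 1, blockTriangular_one, blockTriangular_one, mul_one 1, by simp⟩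

theorem BorelConj.trans {A B C : Matrix (Fin n) (Fin n) K}
    (hAB : BorelConj A B) (hBC : BorelConj B C) : BorelConj A C := by
  obtain ⟨P, Q, hP, hQ, hPQ, rfl⟩ := hAB
  obtain ⟨P', Q', hP', hQ', hPQ', rfl⟩ := hBC
  refine ⟨P' * P, Q * Q', hP'.mul hP, hQ.mul hQ', ?_, by simp only [Matrix.mul_assoc]⟩
  rw [Matrix.mul_assoc, ← Matrix.mul_assoc P, hPQ, Matrix.one_mul, hPQ']

def strictUpperPermMatrix (π : Perm (Fin n)) : Matrix (Fin n) (Fin n) K :=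
  of fun i j => if i < j ∧ j = π i then 1 else 0

/-- The matrix `[[a, s], [0, S]]`. -/
def bordered (a : K) (s : Fin n → K) (S : Matrix (Fin n) (Fin n) K) :
    Matrix (Fin (n + 1)) (Fin (n + 1)) K :=
  of (Fin.cons (Fin.cons a s) fun i => Fin.cons 0 (S i))

variable {π : Perm (Fin n)} {a b : K} {s t : Fin n → K} {S T : Matrix (Fin n) (Fin n) K}

theorem strictUpperPermMatrix_mulVec_apply (v : Fin n → K) (i : Fin n) :
    (strictUpperPermMatrix π *ᵥ v) i = if i < π i then v (π i) else 0 := by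
  simp only [strictUpperPermMatrix, mulVec, dotProduct, of_apply, ite_mul, one_mul, zero_mul]
  rw [Finset.sum_eq_single (π i) (fun j _ hj => if_neg fun h => hj h.2) (by simp)]
  simp

theorem vecMul_strictUpperPermMatrix_apply (hπ : Involutive π)
    (v : Fin n → K) (j : Fin n) :
    (v ᵥ* strictUpperPermMatrix π) j = if π j < j then v (π j) else 0 := by
  simp only [strictUpperPermMatrix, vecMul, dotProduct, of_apply, mul_ite, mul_one, mul_zero]
  rw [Finset.sum_eq_single (π j) (fun i _ hi => if_neg fun h => hi (by rw [h.2, hπ])) (by simp)]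
  simp [hπ j]

theorem vecMul_strictUpperPermMatrix_eq_zero (hπ : Involutive π)
    (ht : ∀ j, π j ≠ j → t j = 0) : t ᵥ* (strictUpperPermMatrix π : Matrix _ _ K) = 0 := by
  funext j
  rw [vecMul_strictUpperPermMatrix_apply hπ, Pi.zero_apply, ite_eq_right_iff]
  exact fun h => ht _ (by rw [hπ]; exact h.ne')

theorem strictUpperPermMatrix_mulVec_eq_zero (hπ : Involutive π)
    (ht : ∀ j, π j ≠ j → t j = 0) : (strictUpperPermMatrix π : Matrix _ _ K) *ᵥ t = 0 := by
  funext i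
  rw [strictUpperPermMatrix_mulVec_apply, Pi.zero_apply, ite_eq_right_iff]
  exact fun h => ht _ (by rw [hπ]; exact h.ne)

@[simp] theorem bordered_zero_zero : bordered a s S 0 0 = a := rfl
@[simp] theorem bordered_zero_succ (j : Fin n) : bordered a s S 0 j.succ = s j := rfl
@[simp] theorem bordered_succ_zero (i : Fin n) : bordered a s S i.succ 0 = 0 := rfl
@[simp] theorem bordered_succ_succ (i j : Fin n) : bordered a s S i.succ j.succ = S i j := rfl

theorem bordered_submatrix_succ {A : Matrix (Fin (n + 1)) (Fin (n + 1)) K}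
    (hA : A.IsUpperTriangular) :
    bordered (A 0 0) (fun j => A 0 j.succ) (A.submatrix Fin.succ Fin.succ) = A := by
  ext i j
  cases i using Fin.cases <;> cases j using Fin.cases
  all_goals simp
  exact (hA (Fin.succ_pos _)).symm

theorem isUpperTriangular_bordered_iff :
    (bordered a s S).IsUpperTriangular ↔ S.IsUpperTriangular := by
  refine ⟨fun h i j hij => h (Fin.succ_lt_succ_iff.mpr hij), fun h i j hij => ?_⟩
  cases i using Fin.cases with
  | zero => exact absurd hij (Fin.not_lt_zero _)
  | succ i => cases j using Fin.cases with
    | zero => rfl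
    | succ j => exact h (Fin.succ_lt_succ_iff.mp hij)

theorem bordered_mul_bordered :
    bordered a s S * bordered b t T = bordered (a * b) (a • t + s ᵥ* T) (S * T) := by
  ext i j
  cases i using Fin.cases <;> cases j using Fin.cases <;>
    simp [mul_apply, Fin.sum_univ_succ, vecMul, dotProduct]

theorem bordered_one_zero_one : bordered (1 : K) 0 (1 : Matrix (Fin n) (Fin n) K) = 1 := by
  ext i j
  cases i using Fin.cases <;> cases j using Fin.cases <;>
    simp [one_apply, Fin.succ_ne_zero, (Fin.succ_ne_zero _).symm]

theorem bordered_eq_zero_iff : bordered a s S = 0 ↔ a = 0 ∧ s = 0 ∧ S = 0 := by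
  refine ⟨fun h => ⟨congr_fun (congr_fun h 0) 0,
    funext fun j => congr_fun (congr_fun h 0) j.succ,
    funext fun i => funext fun j => congr_fun (congr_fun h i.succ) j.succ⟩, ?_⟩
  rintro ⟨rfl, rfl, rfl⟩
  ext i j
  cases i using Fin.cases <;> cases j using Fin.cases <;> rfl

/-- Conjugation by `[[c, q], [0, P]]`, whose inverse is `[[c⁻¹, -c⁻¹ q Q], [0, Q]]`. -/
theorem BorelConj.bordered_of_mul_eq_one {P Q : Matrix (Fin n) (Fin n) K}
    (hP : P.IsUpperTriangular) (hQ : Q.IsUpperTriangular) (hPQ : P * Q = 1)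
    {c : K} (hc : c ≠ 0) (q : Fin n → K) :
    BorelConj (bordered 0 s S) (bordered 0 ((c • s + q ᵥ* S) ᵥ* Q) (P * S * Q)) := by
  refine ⟨bordered c q P, bordered c⁻¹ (-(c⁻¹ • (q ᵥ* Q))) Q,
    isUpperTriangular_bordered_iff.mpr hP, isUpperTriangular_bordered_iff.mpr hQ, ?_, ?_⟩
  · rw [bordered_mul_bordered, mul_inv_cancel₀ hc, hPQ, smul_neg, smul_smul,
      mul_inv_cancel₀ hc, one_smul, neg_add_cancel, bordered_one_zero_one]
  · simp only [bordered_mul_bordered, mul_zero, zero_mul, zero_smul, zero_add]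

theorem BorelConj.bordered_restrict_fixed (hπ : Involutive π)
    (hs : s ᵥ* strictUpperPermMatrix π = 0) :
    BorelConj (bordered 0 s (strictUpperPermMatrix π))
      (bordered 0 (fun j => if π j = j then s j else 0) (strictUpperPermMatrix π)) := by
  convert BorelConj.bordered_of_mul_eq_one blockTriangular_one blockTriangular_one (mul_one 1)
    one_ne_zero (-(s ∘ π)) using 2
  · funext j
    have hsj := congr_fun hs (π j)
    rw [vecMul_strictUpperPermMatrix_apply hπ, hπ] at hsj
    simp only [vecMul_one, one_smul, Pi.add_apply, vecMul_strictUpperPermMatrix_apply hπ,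
      Pi.neg_apply, Function.comp_apply, hπ j]
    rcases lt_trichotomy (π j) j with h | h | h
    · simp [h, h.ne]
    · simp [h]
    · simpa [h.ne', h.not_gt, h] using hsj.symm
  · simp

theorem BorelConj.bordered_single (hπ : Involutive π) (ht : ∀ j, π j ≠ j → t j = 0)
    {k : Fin n} (hk : t k ≠ 0) (hmin : ∀ j < k, t j = 0) :
    BorelConj (bordered 0 t (strictUpperPermMatrix π))
      (bordered 0 (Pi.single k 1) (strictUpperPermMatrix π)) := by
  set S : Matrix (Fin n) (Fin n) K := strictUpperPermMatrix π
  set u : Fin n → K := (t k)⁻¹ • t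
  have hu : u k = 1 := inv_mul_cancel₀ hk
  set w : Fin n → K := u - Pi.single k 1
  have hπk : π k = k := by_contra fun h => hk (ht k h)
  have hw : ∀ j, π j ≠ j → w j = 0 := fun j hj => by
    simp [w, u, ht j hj, show j ≠ k by rintro rfl; exact hj hπk]
  -- Conjugating by `1 + E` clears the entries of `u` off `k`; it fixes `S` because `w` and
  -- `Pi.single k 1` live on fixed points of `π`.
  set E : Matrix (Fin n) (Fin n) K := vecMulVec (Pi.single k 1) w
  have hE : E.IsUpperTriangular := fun i j (hij : j < i) => by
    by_cases hi : i = k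
    · subst hi; simp [E, w, u, vecMulVec_apply, hmin j hij, hij.ne]
    · simp [E, vecMulVec_apply, hi]
  have hEE : E * E = 0 := by simp [E, vecMulVec_mul_vecMulVec, w, hu]
  have hES : E * S = 0 := by
    rw [vecMulVec_mul, vecMul_strictUpperPermMatrix_eq_zero hπ hw, vecMulVec_zero]
  have hSE : S * E = 0 := by
    rw [mul_vecMulVec, strictUpperPermMatrix_mulVec_eq_zero hπ, zero_vecMulVec]
    intro j hj
    simp [show j ≠ k by rintro rfl; exact hj hπk]
  convert BorelConj.bordered_of_mul_eq_one (S := S) (blockTriangular_one.add hE)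
    (blockTriangular_one.sub hE) (show (1 + E) * (1 - E) = 1 by
      rw [add_mul, one_mul, mul_sub, mul_one, hEE]; abel) (inv_ne_zero hk) 0 using 2
  · change _ = (u + 0 ᵥ* S) ᵥ* (1 - E)
    rw [zero_vecMul, add_zero, vecMul_sub, vecMul_one, vecMul_vecMulVec, dotProduct_single,
      mul_one, hu, one_smul, sub_sub_cancel]
  · rw [add_mul, one_mul, hES, add_zero, mul_sub, mul_one, hSE, sub_zero]

theorem BorelConj.exists_bordered_single (hπ : Involutive π) (ht : ∀ j, π j ≠ j → t j = 0) :
    ∃ p : Fin (n + 1), (∀ k, k.succ = p → π k = k) ∧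
      BorelConj (bordered 0 t (strictUpperPermMatrix π))
        (bordered 0 (fun j => if j.succ = p then 1 else 0) (strictUpperPermMatrix π)) := by
  by_cases h : t = 0
  · refine ⟨0, fun k hk => absurd hk (Fin.succ_ne_zero k), ?_⟩
    convert BorelConj.refl (bordered 0 t (strictUpperPermMatrix π)) using 2
    funext j
    simp [h, Fin.succ_ne_zero]
  · obtain ⟨k, hk⟩ := exists_minimal_of_wellFoundedLT (fun j => t j ≠ 0) (Function.ne_iff.mp h)
    refine ⟨k.succ, fun j hj => Fin.succ_inj.mp hj ▸ by_contra fun h => hk.1 (ht k h), ?_⟩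
    convert BorelConj.bordered_single hπ ht hk.1 fun j hj => not_not.mp (hk.not_lt · hj)
      using 2
    funext j
    simp [Pi.single_apply]

theorem involutive_decomposeFin_symm (hπ : Involutive π) {p : Fin (n + 1)}
    (hp : ∀ k, k.succ = p → π k = k) : Involutive (Perm.decomposeFin.symm (p, π)) := by
  intro i
  cases i using Fin.cases with
  | zero =>
    cases p using Fin.cases with
    | zero => simp
    | succ k => simp [hp k rfl]
  | succ i =>
    by_cases h : (π i).succ = p
    · have hi : π i = i := by have := hp _ h; rwa [hπ, eq_comm] at this
      subst h
      simp [hi]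
    · have hi : i.succ ≠ p := fun h' => h (by rw [← h', hp i h'])
      simp [swap_apply_of_ne_of_ne (Fin.succ_ne_zero _) h, hπ i,
        swap_apply_of_ne_of_ne (Fin.succ_ne_zero _) hi]

theorem strictUpperPermMatrix_decomposeFin_symm (hπ : Involutive π) {p : Fin (n + 1)}
    (hp : ∀ k, k.succ = p → π k = k) :
    (strictUpperPermMatrix (Perm.decomposeFin.symm (p, π)) : Matrix _ _ K) =
      bordered 0 (fun j => if j.succ = p then 1 else 0) (strictUpperPermMatrix π) := by
  ext i j
  cases i using Fin.cases <;> cases j using Fin.cases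
  · simp [strictUpperPermMatrix]
  · simp [strictUpperPermMatrix, Fin.succ_pos]
  · simp [strictUpperPermMatrix]
  · rename_i i j
    simp only [strictUpperPermMatrix, of_apply, Perm.decomposeFin_symm_apply_succ,
      bordered_succ_succ, Fin.succ_lt_succ_iff]
    refine if_congr (and_congr_right fun hij => ?_) rfl rfl
    by_cases h : (π i).succ = p
    · have hi : π i = i := by have := hp _ h; rwa [hπ, eq_comm] at this
      subst h
      simp [hi, hij.ne']
    · rw [swap_apply_of_ne_of_ne (Fin.succ_ne_zero _) h, Fin.succ_inj]

theorem exists_involutive_borelConj_strictUpperPermMatrix :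
    ∀ {n : ℕ} (A : Matrix (Fin n) (Fin n) K), A.IsUpperTriangular → A * A = 0 →
      ∃ π : Perm (Fin n), Involutive π ∧ BorelConj A (strictUpperPermMatrix π)
  | 0, A, _, _ => ⟨1, fun i => i.elim0, 1, 1, blockTriangular_one, blockTriangular_one,
      Subsingleton.elim _ _, Subsingleton.elim _ _⟩
  | n + 1, A, hA, hAA => by
    obtain ⟨a, r, A', rfl⟩ : ∃ a r A', A = bordered a r A' :=
      ⟨_, _, _, (bordered_submatrix_succ hA).symm⟩
    rw [bordered_mul_bordered, bordered_eq_zero_iff, mul_self_eq_zero] at hAA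
    obtain ⟨rfl, hrA, hA'A'⟩ := hAA
    rw [zero_smul, zero_add] at hrA
    obtain ⟨π, hπ, P, Q, hP, hQ, hPQ, hconj⟩ :=
      exists_involutive_borelConj_strictUpperPermMatrix A'
        (isUpperTriangular_bordered_iff.mp hA) hA'A'
    have hs : (r ᵥ* Q) ᵥ* strictUpperPermMatrix π = 0 := by
      rw [← hconj, vecMul_vecMul, ← Matrix.mul_assoc, ← Matrix.mul_assoc, mul_eq_one_comm.mp hPQ,
        Matrix.one_mul, ← vecMul_vecMul, hrA, zero_vecMul]
    obtain ⟨p, hp, hsingle⟩ := BorelConj.exists_bordered_single hπ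
      (t := fun j => if π j = j then (r ᵥ* Q) j else 0) fun j hj => if_neg hj
    refine ⟨Perm.decomposeFin.symm (p, π), involutive_decomposeFin_symm hπ hp, ?_⟩
    rw [strictUpperPermMatrix_decomposeFin_symm hπ hp]
    refine .trans ?_ ((BorelConj.bordered_restrict_fixed hπ hs).trans hsingle)
    simpa [hconj] using BorelConj.bordered_of_mul_eq_one hP hQ hPQ one_ne_zero 0 (s := r) (S := A')

section UpperPart

variable {m α : Type*} [LinearOrder m] [Zero α]

def upperPart (M : Matrix m m α) : Matrix m m α :=
  of fun i j => if i ≤ j then M i j else 0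

theorem upperPart_apply_of_le (M : Matrix m m α) {i j : m} (h : i ≤ j) :
    upperPart M i j = M i j :=
  if_pos h

theorem isUpperTriangular_upperPart (M : Matrix m m α) : (upperPart M).IsUpperTriangular :=
  fun _ _ h => if_neg (not_le.mpr h)

theorem upperPart_of_isUpperTriangular {M : Matrix m m α} (hM : M.IsUpperTriangular) :
    upperPart M = M := by
  ext i j
  by_cases h : i ≤ j
  · exact if_pos h
  · exact (if_neg h).trans (hM (not_le.mp h)).symm

@[simp] theorem upperPart_zero : upperPart (0 : Matrix m m α) = 0 :=
  upperPart_of_isUpperTriangular fun _ _ _ => rfl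

end UpperPart

section CyclicProduct

variable {N : ℕ}

theorem cyc3_iff_of_le {i k : Fin N} (h : i ≤ k) (j : Fin N) :
    cyc3 i j k ↔ j ∈ Icc i k := by
  rw [mem_Icc, cyc3]
  rcases h.eq_or_lt with rfl | hlt
  · rw [if_pos rfl, le_antisymm_iff, and_comm]
  · rw [if_neg hlt.ne]
    refine ⟨fun h' => ?_, Or.inl⟩
    rcases h' with h' | ⟨-, h'⟩ | ⟨h', -⟩
    exacts [h', absurd h' hlt.not_ge, absurd h' hlt.not_ge]

theorem cprod_apply_of_le (P Q : Matrix (Fin N) (Fin N) ℂ) {i k : Fin N} (h : i ≤ k) :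
    cprod P Q i k = ∑ j ∈ Icc i k, P i j * Q j k := by
  rw [cprod, of_apply]
  congr 1
  ext j
  simp [cyc3_iff_of_le h]

theorem cprod_apply_of_lt {P Q : Matrix (Fin N) (Fin N) ℂ} (hP : P.IsUpperTriangular)
    (hQ : Q.IsUpperTriangular) {i k : Fin N} (h : k < i) : cprod P Q i k = 0 := by
  rw [cprod, of_apply]
  refine Finset.sum_eq_zero fun j hj => ?_
  have hj : cyc3 i j k := (mem_filter.mp hj).2
  rw [cyc3, if_neg h.ne'] at hj
  rcases hj with ⟨-, hjk⟩ | ⟨hjk, -⟩ | ⟨-, hij⟩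
  · rw [hP (hjk.trans_lt h), zero_mul]
  · rw [hP (hjk.trans_lt h), zero_mul]
  · rw [hQ (h.trans_le hij), mul_zero]

theorem upperPart_cprod (P Q : Matrix (Fin N) (Fin N) ℂ) :
    upperPart (cprod P Q) = upperPart (upperPart P * upperPart Q) := by
  ext i k
  by_cases h : i ≤ k
  · rw [upperPart_apply_of_le _ h, upperPart_apply_of_le _ h, cprod_apply_of_le _ _ h, mul_apply,
      ← Finset.sum_subset (subset_univ (Icc i k))]
    · refine Finset.sum_congr rfl fun j hj => ?_
      rw [mem_Icc] at hj
      rw [upperPart_apply_of_le _ hj.1, upperPart_apply_of_le _ hj.2]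
    · intro j _ hj
      rcases not_and_or.mp (mt mem_Icc.mpr hj) with hj | hj
      · rw [isUpperTriangular_upperPart P (not_le.mp hj), zero_mul]
      · rw [isUpperTriangular_upperPart Q (not_le.mp hj), mul_zero]
  · simp [upperPart, h]

theorem cprod_eq_mul {P Q : Matrix (Fin N) (Fin N) ℂ} (hP : P.IsUpperTriangular)
    (hQ : Q.IsUpperTriangular) : cprod P Q = P * Q := by
  ext i k
  rcases le_or_gt i k with h | h
  · simpa [upperPart_apply_of_le _ h, upperPart_of_isUpperTriangular, hP, hQ] using
      congr_fun (congr_fun (upperPart_cprod P Q) i) k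
  · rw [cprod_apply_of_lt hP hQ h, (hP.mul hQ) h]

end CyclicProduct

end BrauerMelnikov

open BrauerMelnikov

theorem brauer_melnikov_normal_form_general (N : ℕ)
    (M : Matrix (Fin N) (Fin N) ℂ)
    (hMM : cprod M M = 0) :
    ∃ P Pinv : Matrix (Fin N) (Fin N) ℂ,
      cprod P Pinv = 1 ∧ cprod Pinv P = 1 ∧
      ∃ π : Equiv.Perm (Fin N), (∀ i, π (π i) = i) ∧
        ∀ i j : Fin N, i ≤ j →
          cprod (cprod P M) Pinv i j = if i < j ∧ j = π i then 1 else 0 := by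
  set A := upperPart M
  have hA : A.IsUpperTriangular := isUpperTriangular_upperPart M
  have hAA : A * A = 0 := by
    rw [← upperPart_of_isUpperTriangular (hA.mul hA), ← upperPart_cprod, hMM, upperPart_zero]
  obtain ⟨π, hπ, P, Q, hP, hQ, hPQ, hconj⟩ :=
    exists_involutive_borelConj_strictUpperPermMatrix A hA hAA
  refine ⟨P, Q, by rw [cprod_eq_mul hP hQ, hPQ],
    by rw [cprod_eq_mul hQ hP, mul_eq_one_comm.mp hPQ], π, hπ, fun i j hij => ?_⟩
  have hupper : upperPart (cprod (cprod P M) Q) = upperPart (strictUpperPermMatrix π) := by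
    rw [upperPart_cprod, upperPart_cprod, upperPart_of_isUpperTriangular hP,
      upperPart_of_isUpperTriangular (hP.mul hA), upperPart_of_isUpperTriangular hQ, hconj]
  simpa [upperPart_apply_of_le _ hij, strictUpperPermMatrix] using
    congr_fun (congr_fun hupper i) j

/-- Melnikov normal form under `•`-conjugation: for every `M` with zero diagonal and
`M • M = 0` there are a `•`-invertible `P` (with `•`-inverse `Pinv`) and an involution
`π` such that the weak upper triangle of `P • M • Pinv` is the strictly upper
triangular part of the permutation matrix of `π`: for `i ≤ j`,
`(P • M • Pinv)_{ij} = 1` if `i < j` and `j = π(i)`, and `= 0` otherwise. -/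
theorem brauer_melnikov_normal_form (N : ℕ) (hN : 0 < N)
    (M : Matrix (Fin N) (Fin N) ℂ)
    (hdiag : ∀ i, M i i = 0) (hMM : cprod M M = 0) :
    ∃ P Pinv : Matrix (Fin N) (Fin N) ℂ,
      cprod P Pinv = 1 ∧ cprod Pinv P = 1 ∧
      ∃ π : Equiv.Perm (Fin N), (∀ i, π (π i) = i) ∧
        ∀ i j : Fin N, i ≤ j →
          cprod (cprod P M) Pinv i j = if i < j ∧ j = π i then 1 else 0 :=
  brauer_melnikov_normal_form_general N M hMM
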